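/- With notation as above (W a basis of F_{q^n} over F_q, T_{W,i} the projective polynomials defined from the (i,0)-cofactors of the Moore matrix M_W), the polynomials T_{W,0}, …, T_{W,n-1} have no common root in μ_{(q^n-1)/(q-1)}. -/

import Mathlib

/-- The Moore matrix of `s`, with `(i,j)` entry `s i ^ q ^ j`, `q = |K|`. -/
def mooreMatrix (K : Type*) [Field K] [Fintype K] {L : Type*} [Field L] {m : ℕ}
    (s : Fin m → L) : Matrix (Fin m) (Fin m) L :=
  Matrix.of fun i j => s i ^ Fintype.card K ^ (j : ℕ)

/-- The `(i,0)`-cofactor of the Moore matrix of `s`. -/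
def mooreCof (K : Type*) [Field K] [Fintype K] {L : Type*} [Field L] {n : ℕ}
    (s : Fin (n + 1) → L) (i : Fin (n + 1)) : L :=
  (-1 : L) ^ (i : ℕ) *
    ((mooreMatrix K s).submatrix i.succAbove (Fin.succAbove 0)).det

/-- The projective polynomial `T_{W,i}(x) = ∑ₖ (-1)^{k(n-1)} cᵢ^{qᵏ} x^{(qᵏ-1)/(q-1)}`,
where here the basis has `n + 1` elements (so the paper's `n - 1` is `n`). -/
def Tproj (K : Type*) [Field K] [Fintype K] {L : Type*} [Field L] {n : ℕ}
    (s : Fin (n + 1) → L) (i : Fin (n + 1)) (x : L) : L :=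
  ∑ k : Fin (n + 1), (-1 : L) ^ ((k : ℕ) * n) * mooreCof K s i ^ Fintype.card K ^ (k : ℕ) *
    x ^ ((Fintype.card K ^ (k : ℕ) - 1) / (Fintype.card K - 1))

/-! The `(i,0)`-cofactors `cᵢ` of the Moore matrix `M` of `ω` satisfy
`∑ᵢ ωᵢ^{q^j} cᵢ = δ_{j0} det M`, the `(0,j)` entry of `adj M * M = det M • 1`. Raising to the
power `q^k` and using `ω^{q^{n+1}} = ω` turns this into `∑ᵢ ωᵢ cᵢ^{q^k} = δ_{k0} det M`, whence
`∑ᵢ ωᵢ T_{W,i}(x) = det M`. The Moore matrix of a basis is nonsingular because the Frobenius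
powers `z ↦ z^{q^j}`, `j ≤ n`, are distinct characters and hence linearly independent over `L`. -/

open Matrix Finset Module FiniteField

theorem LinearIndependent.det_of_apply_basis_ne_zero {ι K V L : Type*} [Fintype ι]
    [DecidableEq ι] [CommRing K] [AddCommGroup V] [Module K V] [Field L] [Algebra K L]
    (b : Basis ι K V) {f : ι → V →ₗ[K] L} (hf : LinearIndependent L f) :
    (Matrix.of fun i j => f j (b i)).det ≠ 0 := by
  intro hdet
  obtain ⟨v, hv, hfv⟩ := exists_mulVec_eq_zero_iff.mpr hdet
  have hsum : ∑ j, v j • f j = 0 := b.ext fun i => by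
    simpa [mulVec, dotProduct, mul_comm] using congrFun hfv i
  exact hv (funext (Fintype.linearIndependent_iff.mp hf v hsum))

lemma mooreCof_eq_adjugate {K L : Type*} [Field K] [Fintype K] [Field L] {n : ℕ}
    (s : Fin (n + 1) → L) (i : Fin (n + 1)) :
    mooreCof K s i = adjugate (mooreMatrix K s) 0 i := by
  simp [mooreCof, adjugate_fin_succ_eq_det_submatrix]

lemma sum_pow_mul_mooreCof {K L : Type*} [Field K] [Fintype K] [Field L] {n : ℕ}
    (s : Fin (n + 1) → L) (j : Fin (n + 1)) :
    ∑ i, s i ^ Fintype.card K ^ (j : ℕ) * mooreCof K s i =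
      if j = 0 then (mooreMatrix K s).det else 0 := by
  have := congrFun (congrFun (adjugate_mul (mooreMatrix K s)) 0) j
  simpa [mul_apply, mooreCof_eq_adjugate, mooreMatrix, one_apply, mul_comm, eq_comm] using this

section

variable {K L : Type*} [Field K] [Fintype K] [Field L] [Algebra K L]

lemma frobeniusAlgHom_pow_apply (k : ℕ) (z : L) :
    (frobeniusAlgHom K L ^ k) z = z ^ Fintype.card K ^ k := by
  rw [AlgHom.coe_pow, coe_frobeniusAlgHom, pow_iterate]

lemma mooreMatrix_eq_of_frobeniusAlgHom_pow {m : ℕ} (s : Fin m → L) :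
    mooreMatrix K s = of fun i (j : Fin m) => (frobeniusAlgHom K L ^ (j : ℕ)) (s i) := by
  ext i j
  simp [mooreMatrix, frobeniusAlgHom_pow_apply]

lemma mooreMatrix_det_ne_zero {m : ℕ} (b : Basis (Fin m) K L) :
    (mooreMatrix K b).det ≠ 0 := by
  have : Module.Finite K L := .of_basis b
  have : Finite L := Module.finite_of_finite K
  have hm : finrank K L = m := by simp [finrank_eq_card_basis b]
  subst hm
  have hσ := (linearIndependent_algHom_toLinearMap K L L).comp _
    (bijective_frobeniusAlgHom_pow K L).1
  rw [mooreMatrix_eq_of_frobeniusAlgHom_pow]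
  exact hσ.det_of_apply_basis_ne_zero b

variable [Fintype L] {n : ℕ}

lemma sum_mul_mooreCof_pow (h : finrank K L = n + 1) (s : Fin (n + 1) → L) (k : Fin (n + 1)) :
    ∑ i, s i * mooreCof K s i ^ Fintype.card K ^ (k : ℕ) =
      if k = 0 then (mooreMatrix K s).det else 0 := by
  rcases eq_or_ne k 0 with rfl | hk
  · simpa using sum_pow_mul_mooreCof (K := K) s 0
  have hk₀ : 0 < (k : ℕ) := Nat.pos_of_ne_zero (Fin.val_ne_iff.mpr hk)
  set j : Fin (n + 1) := ⟨n + 1 - k, by omega⟩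
  have hj : j ≠ 0 := Fin.ne_of_val_ne (by simp [j]; omega)
  have hs : ∀ z : L, (z ^ Fintype.card K ^ (j : ℕ)) ^ Fintype.card K ^ (k : ℕ) = z := fun z => by
    rw [← pow_mul, ← pow_add, show (j : ℕ) + k = finrank K L by simp [j, h],
      ← card_eq_pow_finrank, FiniteField.pow_card]
  calc ∑ i, s i * mooreCof K s i ^ Fintype.card K ^ (k : ℕ)
      = (frobeniusAlgHom K L ^ (k : ℕ))
          (∑ i, s i ^ Fintype.card K ^ (j : ℕ) * mooreCof K s i) := by
        simp [frobeniusAlgHom_pow_apply, mul_pow, hs]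
    _ = if k = 0 then (mooreMatrix K s).det else 0 := by
        rw [sum_pow_mul_mooreCof, if_neg hj, map_zero, if_neg hk]

lemma sum_mul_Tproj (h : finrank K L = n + 1) (s : Fin (n + 1) → L) (x : L) :
    ∑ i, s i * Tproj K s i x = (mooreMatrix K s).det := by
  simp only [Tproj, mul_sum]
  rw [sum_comm]
  simp_rw [show ∀ a c y z : L, z * (a * c * y) = a * y * (z * c) from fun _ _ _ _ => by ring,
    ← mul_sum, sum_mul_mooreCof_pow h]
  simp

end

theorem stmt12 (K L : Type*) [Field K] [Fintype K] [Field L] [Fintype L] [Algebra K L]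
    (n : ℕ) (ω : Fin (n + 1) → L)
    (hω : ∃ b : Module.Basis (Fin (n + 1)) K L, ∀ i, b i = ω i) :
    ∀ x : L, x ≠ 0 →
      x ^ ((Fintype.card K ^ (n + 1) - 1) / (Fintype.card K - 1)) = 1 →
        ∃ i : Fin (n + 1), Tproj K ω i x ≠ 0 := by
  obtain ⟨b, hb⟩ := hω
  obtain rfl : ⇑b = ω := funext hb
  intro x _ _
  by_contra! hT
  apply mooreMatrix_det_ne_zero b
  rw [← sum_mul_Tproj (by simp [finrank_eq_card_basis b]) b x]
  simp [hT]
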